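/- arXiv:1611.01905 — 2 statements merged into one kernel-verified Lean document; each statement's English description precedes it below -/
import Mathlib

section
/- Let f : ℝ → ℝ be four times continuously differentiable on an interval I with f'' concave on I. Then for all a, b ∈ I with a < b: 0 ≤ (1/(b-a)) ∫_a^b f(t) dt − (1/6)[ f(a) + f(b) + 4 f((a+b)/2) ] ≤ ((b-a)^2/324) [ 2 f''((a+b)/2) − (f''(a) + f''(b)) ]. -/
/-!
Put `m = (a + b) / 2`, `h = (b - a) / 2` and `S t = f'' (m + t) + f'' (m - t)`. Integrating by parts
twice against the symmetrised function `t ↦ f (m + t) + f (m - t)` gives the Peano form of the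
Simpson error,
  `∫_a^b f - (b - a) / 6 * (f a + 4 f m + f b) = -(1/6) ∫_0^h (h - t) (3t - h) S t dt`.
The kernel has integral zero, is `≤ 0` on `[0, h/3]` and `≥ 0` on `[h/3, h]`, and concavity of `f''`
makes `S` antitone. Replacing `S` by `S - S (h/3)` shows the integral is `≤ 0`; replacing it by
`S - S 0` and using `S h - S 0 ≤ S t - S 0 ≤ 0` gives the lower bound `(4 h³ / 27) (S h - S 0)`,
which is the upper bound of the theorem.
-/

open MeasureTheory intervalIntegral Set Topology

def simpsonKernel (h t : ℝ) : ℝ := (h - t) * (3 * t - h)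

theorem continuous_simpsonKernel (h : ℝ) : Continuous (simpsonKernel h) := by
  unfold simpsonKernel
  fun_prop

theorem hasDerivAt_simpsonKernel (h t : ℝ) :
    HasDerivAt (simpsonKernel h) (4 * h - 6 * t) t :=
  (((hasDerivAt_id' t).const_sub h).mul
    (((hasDerivAt_id' t).const_mul 3).sub_const h)).congr_deriv (by ring)

theorem hasDerivAt_simpsonKernel_antideriv (h t : ℝ) :
    HasDerivAt (fun t => -t * (h - t) ^ 2) (simpsonKernel h t) t := by
  refine ((hasDerivAt_id' t).neg.mul (((hasDerivAt_id' t).const_sub h).pow 2)).congr_deriv ?_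
  simp only [simpsonKernel, Pi.neg_apply, Pi.pow_apply]
  ring

theorem integral_simpsonKernel (h a b : ℝ) :
    ∫ t in a..b, simpsonKernel h t = -b * (h - b) ^ 2 - -a * (h - a) ^ 2 :=
  integral_eq_sub_of_hasDerivAt (fun t _ => hasDerivAt_simpsonKernel_antideriv h t)
    ((continuous_simpsonKernel h).intervalIntegrable _ _)

theorem integral_simpsonKernel_mul_sub_const {S : ℝ → ℝ} {h : ℝ}
    (hS : IntervalIntegrable S volume 0 h) (c : ℝ) :
    ∫ t in 0..h, simpsonKernel h t * (S t - c) = ∫ t in 0..h, simpsonKernel h t * S t := by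
  simp_rw [mul_sub]
  rw [integral_sub (hS.continuousOn_mul (continuous_simpsonKernel h).continuousOn)
    ((continuous_simpsonKernel h).intervalIntegrable _ _ |>.mul_const c),
    intervalIntegral.integral_mul_const, integral_simpsonKernel]
  ring

theorem integral_sub_simpson_eq_integral_simpsonKernel_mul {φ φ' φ'' : ℝ → ℝ} {h : ℝ}
    (hh : 0 ≤ h) (hφ : ContinuousOn φ (Icc 0 h)) (hφ' : ContinuousOn φ' (Icc 0 h))
    (hφφ' : ∀ t ∈ Ioo 0 h, HasDerivAt φ (φ' t) t)
    (hφ'φ'' : ∀ t ∈ Ioo 0 h, HasDerivAt φ' (φ'' t) t)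
    (hφ'' : IntervalIntegrable φ'' volume 0 h) (hφ'0 : φ' 0 = 0) :
    (∫ t in 0..h, φ t) - h / 3 * (φ h + 2 * φ 0) =
      -(1 / 6) * ∫ t in 0..h, simpsonKernel h t * φ'' t := by
  rw [← uIcc_of_le hh] at hφ hφ'
  have hIoo : Ioo (min 0 h) (max 0 h) = Ioo 0 h := by rw [min_eq_left hh, max_eq_right hh]
  rw [← hIoo] at hφφ' hφ'φ''
  have hw' : ContinuousOn (fun t : ℝ => 4 * h - 6 * t) (uIcc 0 h) := by fun_prop
  have parts₁ := integral_mul_deriv_eq_deriv_mul_of_hasDerivAt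
    (continuous_simpsonKernel h).continuousOn hφ' (fun t _ => hasDerivAt_simpsonKernel h t)
    hφ'φ'' hw'.intervalIntegrable hφ''
  have parts₂ := integral_mul_deriv_eq_deriv_mul_of_hasDerivAt hw' hφ
    (fun t _ => ((hasDerivAt_id' t).const_mul 6).const_sub (4 * h)) hφφ'
    intervalIntegrable_const hφ'.intervalIntegrable
  simp only [simpsonKernel, hφ'0, intervalIntegral.integral_const_mul] at parts₁ parts₂ ⊢
  rw [parts₁, parts₂]
  ring

theorem integral_sub_simpson_eq_of_hasDerivAt {f f' f'' : ℝ → ℝ} {m h : ℝ} (hh : 0 ≤ h)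
    (hf : ContinuousOn f (Icc (m - h) (m + h))) (hf' : ContinuousOn f' (Icc (m - h) (m + h)))
    (hff' : ∀ x ∈ Ioo (m - h) (m + h), HasDerivAt f (f' x) x)
    (hf'f'' : ∀ x ∈ Ioo (m - h) (m + h), HasDerivAt f' (f'' x) x)
    (hf'' : IntervalIntegrable (fun t => f'' (m + t) + f'' (m - t)) volume 0 h) :
    (∫ x in (m - h)..(m + h), f x) - h / 3 * (f (m - h) + 4 * f m + f (m + h)) =
      -(1 / 6) * ∫ t in 0..h, simpsonKernel h t * (f'' (m + t) + f'' (m - t)) := by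
  have hadd : MapsTo (m + ·) (Icc 0 h) (Icc (m - h) (m + h)) := fun t ht =>
    ⟨by linarith [ht.1], by linarith [ht.2]⟩
  have hsub : MapsTo (m - ·) (Icc 0 h) (Icc (m - h) (m + h)) := fun t ht =>
    ⟨by linarith [ht.2], by linarith [ht.1]⟩
  have hadd' : MapsTo (m + ·) (Ioo 0 h) (Ioo (m - h) (m + h)) := fun t ht =>
    ⟨by linarith [ht.1], by linarith [ht.2]⟩
  have hsub' : MapsTo (m - ·) (Ioo 0 h) (Ioo (m - h) (m + h)) := fun t ht =>
    ⟨by linarith [ht.2], by linarith [ht.1]⟩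
  have hcont {g : ℝ → ℝ} (hg : ContinuousOn g (Icc (m - h) (m + h))) :
      ContinuousOn (fun t => g (m + t)) (Icc 0 h) ∧
        ContinuousOn (fun t => g (m - t)) (Icc 0 h) :=
    ⟨hg.comp (by fun_prop) hadd, hg.comp (by fun_prop) hsub⟩
  have key := integral_sub_simpson_eq_integral_simpsonKernel_mul
    (φ := fun t => f (m + t) + f (m - t)) (φ' := fun t => f' (m + t) - f' (m - t)) hh
    ((hcont hf).1.add (hcont hf).2) ((hcont hf').1.sub (hcont hf').2)
    (fun t ht => (((hff' _ (hadd' ht)).comp_const_add m t).add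
      ((hff' _ (hsub' ht)).comp_const_sub m t)).congr_deriv (sub_eq_add_neg _ _).symm)
    (fun t ht => (((hf'f'' _ (hadd' ht)).comp_const_add m t).sub
      ((hf'f'' _ (hsub' ht)).comp_const_sub m t)).congr_deriv (sub_neg_eq_add _ _))
    hf'' (by simp)
  have hsplit : ∫ t in 0..h, (f (m + t) + f (m - t)) = ∫ x in (m - h)..(m + h), f x := by
    rw [integral_add ((hcont hf).1.intervalIntegrable_of_Icc hh)
      ((hcont hf).2.intervalIntegrable_of_Icc hh), integral_comp_add_left,
      integral_comp_sub_left, add_zero, sub_zero, add_comm, integral_add_adjacent_intervals]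
    · exact (hf.mono (Icc_subset_Icc le_rfl (by linarith))).intervalIntegrable_of_Icc
        (by linarith)
    · exact (hf.mono (Icc_subset_Icc (by linarith) le_rfl)).intervalIntegrable_of_Icc
        (by linarith)
  rw [← hsplit, ← key]
  simp only [add_zero, sub_zero]
  ring

theorem ConcaveOn.antitoneOn_add_map_sub {g : ℝ → ℝ} {m h : ℝ}
    (hg : ConcaveOn ℝ (Icc (m - h) (m + h)) g) :
    AntitoneOn (fun t => g (m + t) + g (m - t)) (Icc 0 h) := by
  intro s hs t ht hst
  rcases ht.1.eq_or_lt with rfl | ht0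
  · rw [le_antisymm hst hs.1]
  have hl : m - t ∈ Icc (m - h) (m + h) := by constructor <;> linarith [ht.1, ht.2]
  have hr : m + t ∈ Icc (m - h) (m + h) := by constructor <;> linarith [ht.1, ht.2]
  -- `m ± s` are the convex combinations of `m - t` and `m + t` with weights `p, q` and `q, p`
  set p := (t - s) / (2 * t)
  set q := (t + s) / (2 * t)
  have hp : 0 ≤ p := div_nonneg (by linarith) (by linarith)
  have hq : 0 ≤ q := div_nonneg (by linarith [hs.1]) (by linarith)
  have hpq : p + q = 1 := by simp only [p, q]; field_simp; ring
  have hplus : p • g (m - t) + q • g (m + t) ≤ g (m + s) :=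
    (hg.2 hl hr hp hq hpq).trans_eq <| congrArg g <| by
      simp only [p, q, smul_eq_mul]; field_simp; ring
  have hminus : q • g (m - t) + p • g (m + t) ≤ g (m - s) :=
    (hg.2 hl hr hq hp (by linarith)).trans_eq <| congrArg g <| by
      simp only [p, q, smul_eq_mul]; field_simp; ring
  simp only [smul_eq_mul] at hplus hminus
  show g (m + t) + g (m - t) ≤ g (m + s) + g (m - s)
  clear_value p q
  linear_combination hplus + hminus - (g (m - t) + g (m + t)) * hpq

theorem AntitoneOn.intervalIntegrable_Icc {S : ℝ → ℝ} {a b : ℝ} (hab : a ≤ b)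
    (hS : AntitoneOn S (Icc a b)) : IntervalIntegrable S volume a b :=
  (hS.mono (uIcc_of_le hab).subset).intervalIntegrable

theorem integral_simpsonKernel_mul_nonpos {S : ℝ → ℝ} {h : ℝ} (hh : 0 ≤ h)
    (hS : AntitoneOn S (Icc 0 h)) : ∫ t in 0..h, simpsonKernel h t * S t ≤ 0 := by
  have hSi := hS.intervalIntegrable_Icc hh
  have hmid : h / 3 ∈ Icc 0 h := ⟨by linarith, by linarith⟩
  rw [← integral_simpsonKernel_mul_sub_const hSi (S (h / 3))]
  refine (integral_mono_on hh
    ((hSi.sub intervalIntegrable_const).continuousOn_mul (continuous_simpsonKernel h).continuousOn)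
    intervalIntegrable_const fun t ht => ?_).trans_eq integral_zero
  rcases le_total t (h / 3) with hth | hth
  · exact mul_nonpos_of_nonpos_of_nonneg
      (mul_nonpos_of_nonneg_of_nonpos (by linarith [ht.2]) (by linarith))
      (sub_nonneg.2 (hS ht hmid hth))
  · exact mul_nonpos_of_nonneg_of_nonpos
      (mul_nonneg (by linarith [ht.2]) (by linarith))
      (sub_nonpos.2 (hS hmid ht hth))

theorem mul_sub_le_integral_simpsonKernel_mul {S : ℝ → ℝ} {h : ℝ} (hh : 0 ≤ h)
    (hS : AntitoneOn S (Icc 0 h)) :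
    4 * h ^ 3 / 27 * (S h - S 0) ≤ ∫ t in 0..h, simpsonKernel h t * S t := by
  have hSi := hS.intervalIntegrable_Icc hh
  have h0 : (0 : ℝ) ∈ Icc 0 h := ⟨le_rfl, hh⟩
  have hh' : h ∈ Icc 0 h := ⟨hh, le_rfl⟩
  have hint : IntervalIntegrable (fun t => simpsonKernel h t * (S t - S 0)) volume 0 h :=
    (hSi.sub intervalIntegrable_const).continuousOn_mul (continuous_simpsonKernel h).continuousOn
  have hsub {c d : ℝ} (hc : 0 ≤ c) (hcd : c ≤ d) (hd : d ≤ h) : uIcc c d ⊆ uIcc 0 h := by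
    rw [uIcc_of_le hcd, uIcc_of_le hh]
    exact Icc_subset_Icc hc hd
  have hleft : 0 ≤ ∫ t in 0..h / 3, simpsonKernel h t * (S t - S 0) :=
    integral_nonneg (by linarith) fun t ht => mul_nonneg_of_nonpos_of_nonpos
      (mul_nonpos_of_nonneg_of_nonpos (by linarith [ht.2]) (by linarith [ht.2]))
      (sub_nonpos.2 (hS h0 ⟨ht.1, by linarith [ht.2]⟩ ht.1))
  have hright : 4 * h ^ 3 / 27 * (S h - S 0) ≤
      ∫ t in h / 3..h, simpsonKernel h t * (S t - S 0) :=
    calc 4 * h ^ 3 / 27 * (S h - S 0)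
        = ∫ t in h / 3..h, simpsonKernel h t * (S h - S 0) := by
          rw [intervalIntegral.integral_mul_const, integral_simpsonKernel]; ring
      _ ≤ ∫ t in h / 3..h, simpsonKernel h t * (S t - S 0) :=
          integral_mono_on (by linarith)
            ((continuous_simpsonKernel h).intervalIntegrable _ _ |>.mul_const _)
            (hint.mono_set (hsub (by linarith) (by linarith) le_rfl)) fun t ht =>
              mul_le_mul_of_nonneg_left
                (sub_le_sub_right (hS ⟨by linarith [ht.1], ht.2⟩ hh' ht.2) _)
                (mul_nonneg (by linarith [ht.2]) (by linarith [ht.1]))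
  rw [← integral_simpsonKernel_mul_sub_const hSi (S 0),
    ← integral_add_adjacent_intervals (b := h / 3)
      (hint.mono_set (hsub le_rfl (by linarith) (by linarith)))
      (hint.mono_set (hsub (by linarith) (by linarith) le_rfl))]
  linarith

theorem ContDiffOn.hasDerivAt_derivWithin {f : ℝ → ℝ} {s : Set ℝ} {x : ℝ}
    (hf : ContDiffOn ℝ 2 f s) (hx : s ∈ 𝓝 x) :
    HasDerivAt (derivWithin f s) (deriv (deriv f) x) x := by
  have hx' : x ∈ interior s := mem_interior_iff_mem_nhds.2 hx
  have hdiff : DifferentiableAt ℝ (deriv f) x :=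
    (((hf.mono interior_subset).deriv_of_isOpen isOpen_interior (m := 1)
      (by norm_num)).differentiableOn (by norm_num) x hx').differentiableAt
      (isOpen_interior.mem_nhds hx')
  have heq : derivWithin f s =ᶠ[𝓝 x] deriv f := by
    filter_upwards [isOpen_interior.mem_nhds hx'] with y hy
    exact derivWithin_of_mem_nhds (mem_interior_iff_mem_nhds.1 hy)
  exact hdiff.hasDerivAt.congr_of_eventuallyEq heq

/-- **Theorem 4, second part.** If `f ∈ C⁴(I)` and `f''` is concave on the interval `I`,
then for `a, b ∈ I` with `a < b`,
`0 ≤ (1/(b-a)) ∫_a^b f - (1/6)[f a + f b + 4 f((a+b)/2)]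
   ≤ ((b-a)²/324)[2 f''((a+b)/2) - (f''(a) + f''(b))]`. -/
theorem stmt_9 (f : ℝ → ℝ) (I : Set ℝ) (hI : Convex ℝ I)
    (hf : ContDiffOn ℝ 4 f I) (hconc'' : ConcaveOn ℝ I (deriv (deriv f)))
    (a b : ℝ) (ha : a ∈ I) (hb : b ∈ I) (hab : a < b) :
    0 ≤ (1 / (b - a)) * (∫ t in a..b, f t)
        - (1 / 6) * (f a + f b + 4 * f ((a + b) / 2)) ∧
    (1 / (b - a)) * (∫ t in a..b, f t)
        - (1 / 6) * (f a + f b + 4 * f ((a + b) / 2)) ≤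
      (b - a) ^ 2 / 324 *
        (2 * deriv (deriv f) ((a + b) / 2) - (deriv (deriv f) a + deriv (deriv f) b)) := by
  obtain ⟨m, h, rfl, rfl⟩ : ∃ m h, a = m - h ∧ b = m + h :=
    ⟨(a + b) / 2, (b - a) / 2, by ring, by ring⟩
  have hh : 0 < h := by linarith
  have hIcc : Icc (m - h) (m + h) ⊆ I := hI.ordConnected.out ha hb
  have hf₂ : ContDiffOn ℝ 2 f (Icc (m - h) (m + h)) := (hf.of_le (by norm_num)).mono hIcc
  have hS := ConcaveOn.antitoneOn_add_map_sub (hconc''.subset hIcc (convex_Icc _ _))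
  -- `derivWithin` is continuous up to the endpoints, where `deriv f` may be a junk value
  have hE := integral_sub_simpson_eq_of_hasDerivAt hh.le hf₂.continuousOn
    (hf₂.continuousOn_derivWithin (uniqueDiffOn_Icc (by linarith)) (by norm_num))
    (fun x hx => (hf₂.differentiableOn (by norm_num) x (Ioo_subset_Icc_self hx)).hasDerivWithinAt
      |>.hasDerivAt (Icc_mem_nhds hx.1 hx.2))
    (fun x hx => hf₂.hasDerivAt_derivWithin (Icc_mem_nhds hx.1 hx.2))
    (hS.intervalIntegrable_Icc hh.le)
  have hlower := integral_simpsonKernel_mul_nonpos hh.le hS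
  have hupper := mul_sub_le_integral_simpsonKernel_mul hh.le hS
  simp only [add_zero, sub_zero] at hupper
  set X := ∫ t in 0..h, simpsonKernel h t * (deriv (deriv f) (m + t) + deriv (deriv f) (m - t))
  rw [show m + h - (m - h) = 2 * h by ring, show (m - h + (m + h)) / 2 = m by ring]
  have hLHS : 1 / (2 * h) * (∫ t in (m - h)..(m + h), f t) -
      1 / 6 * (f (m - h) + f (m + h) + 4 * f m) = -X / (12 * h) := by
    field_simp
    linarith
  rw [hLHS]
  refine ⟨div_nonneg (by linarith) (by positivity), ?_⟩
  rw [div_le_iff₀ (by positivity)]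
  linarith
end

section
/- Let f : ℝ → ℝ be four times continuously differentiable on an interval I and let a, b ∈ I with a < b. Then (1/6)(f(a)+f(b)) + (2/3) f((a+b)/2) − (1/(b-a)) ∫_a^b f(t) dt = ((b-a)^2/48) ∫_0^1 t(2−3t) [ f''(a·t/2 + b(1−t/2)) + f''(b·t/2 + a(1−t/2)) ] dt. -/
/-!
Integrate by parts twice against the kernel `w t = t (2 - 3t)`, for which `w 0 = 0`, `w 1 = -1`,
`w' = 2 - 6t` and `w'' = -6`: for `g` of class `C²` on `[0, 1]` this gives
`∫₀¹ w g'' = 4 g 1 + 2 g 0 - g' 1 - 6 ∫₀¹ g`. Apply it to `g t = f (a + c t)` and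
`g t = f (b - c t)` with `c = (b - a) / 2`, which run from the two endpoints to the midpoint `m`.
The boundary terms
`∓ c f' m` cancel, and the two integrals of `f` add up to `(1 / c) ∫ₐᵇ f`.
-/

open MeasureTheory intervalIntegral Set Topology
open scoped Interval

theorem deriv_deriv_eq_derivWithin_derivWithin {𝕜 F : Type*} [NontriviallyNormedField 𝕜]
    [NormedAddCommGroup F] [NormedSpace 𝕜 F] {f : 𝕜 → F} {s : Set 𝕜} {x : 𝕜} (hs : s ∈ 𝓝 x) :
    deriv (deriv f) x = derivWithin (derivWithin f s) s x := by
  have h : derivWithin f s =ᶠ[𝓝 x] deriv f := by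
    filter_upwards [eventually_mem_nhds_iff.2 hs] with y hy
    exact derivWithin_of_mem_nhds hy
  rw [derivWithin_of_mem_nhds hs, h.deriv_eq]

theorem Convex.mapsTo_add_mul_Icc {s : Set ℝ} (hs : Convex ℝ s) {p h : ℝ} (hp : p ∈ s)
    (hq : p + h ∈ s) : MapsTo (fun t => p + h * t) (Icc 0 1) s := fun t ht => by
  simpa [mul_comm] using hs.add_smul_mem hp hq ht

theorem integral_mul_two_sub_three_mul_mul_of_hasDerivWithinAt {g g' g'' : ℝ → ℝ}
    (hg : ∀ t ∈ Icc (0 : ℝ) 1, HasDerivWithinAt g (g' t) (Icc 0 1) t)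
    (hg' : ∀ t ∈ Icc (0 : ℝ) 1, HasDerivWithinAt g' (g'' t) (Icc 0 1) t)
    (hg'' : IntervalIntegrable g'' volume 0 1) :
    ∫ t in (0 : ℝ)..1, t * (2 - 3 * t) * g'' t =
      4 * g 1 + 2 * g 0 - g' 1 - 6 * ∫ t in (0 : ℝ)..1, g t := by
  rw [← uIcc_of_le zero_le_one] at hg hg'
  have hw : ∀ t ∈ [[(0 : ℝ), 1]],
      HasDerivWithinAt (fun t => t * (2 - 3 * t)) (2 - 6 * t) [[0, 1]] t := fun t _ =>
    (((hasDerivAt_id' t).mul (((hasDerivAt_id' t).const_mul 3).const_sub 2)).congr_deriv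
      (by ring)).hasDerivWithinAt
  have hw' : ∀ t ∈ [[(0 : ℝ), 1]], HasDerivWithinAt (fun t => 2 - 6 * t) (-6) [[0, 1]] t :=
    fun t _ => by simpa using (((hasDerivAt_id t).const_mul 6).const_sub 2).hasDerivWithinAt
  have hg'_int : IntervalIntegrable g' volume 0 1 :=
    ContinuousOn.intervalIntegrable fun t ht => (hg' t ht).continuousWithinAt
  rw [integral_mul_deriv_eq_deriv_mul_of_hasDerivWithinAt hw hg'
      ((by fun_prop : Continuous fun t : ℝ => 2 - 6 * t).intervalIntegrable 0 1) hg'',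
    integral_mul_deriv_eq_deriv_mul_of_hasDerivWithinAt hw' hg intervalIntegrable_const hg'_int,
    intervalIntegral.integral_const_mul]
  ring

theorem integral_mul_two_sub_three_mul_mul_comp_add_mul {f f' f'' : ℝ → ℝ} {s : Set ℝ}
    (hs : Convex ℝ s) (hf : ∀ x ∈ s, HasDerivWithinAt f (f' x) s x)
    (hf' : ∀ x ∈ s, HasDerivWithinAt f' (f'' x) s x) (hf'' : ContinuousOn f'' s)
    {p h : ℝ} (hp : p ∈ s) (hq : p + h ∈ s) (hh : h ≠ 0) :
    h ^ 2 * ∫ t in (0 : ℝ)..1, t * (2 - 3 * t) * f'' (p + h * t) =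
      4 * f (p + h) + 2 * f p - h * f' (p + h) - 6 / h * ∫ x in p..p + h, f x := by
  have hmaps := hs.mapsTo_add_mul_Icc hp hq
  have hline : ∀ t : ℝ, HasDerivWithinAt (fun t => p + h * t) h (Icc 0 1) t := fun t => by
    simpa using (((hasDerivAt_id t).const_mul h).const_add p).hasDerivWithinAt
  have key := integral_mul_two_sub_three_mul_mul_of_hasDerivWithinAt
    (g := fun t => f (p + h * t)) (g' := fun t => h * f' (p + h * t))
    (g'' := fun t => h ^ 2 * f'' (p + h * t))
    (fun t ht => ((hf _ (hmaps ht)).comp t (hline t) hmaps).congr_deriv (mul_comm _ _))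
    (fun t ht => (((hf' _ (hmaps ht)).comp t (hline t) hmaps).const_mul h).congr_deriv
      (by ring))
    ((continuousOn_const.mul (hf''.comp (by fun_prop) hmaps)).intervalIntegrable_of_Icc
      zero_le_one)
  simp only [mul_left_comm _ (h ^ 2), intervalIntegral.integral_const_mul,
    integral_comp_add_mul _ hh, mul_zero, mul_one, add_zero] at key
  rw [key, smul_eq_mul]
  field_simp

theorem simpson_sub_average_eq_of_hasDerivWithinAt {f f' f'' : ℝ → ℝ} {a b : ℝ} (hab : a < b)
    (hf : ∀ x ∈ Icc a b, HasDerivWithinAt f (f' x) (Icc a b) x)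
    (hf' : ∀ x ∈ Icc a b, HasDerivWithinAt f' (f'' x) (Icc a b) x)
    (hf'' : ContinuousOn f'' (Icc a b)) :
    1 / 6 * (f a + f b) + 2 / 3 * f ((a + b) / 2) - 1 / (b - a) * ∫ t in a..b, f t =
      (b - a) ^ 2 / 48 * ∫ t in (0 : ℝ)..1, t * (2 - 3 * t) *
        (f'' (a * (t / 2) + b * (1 - t / 2)) + f'' (b * (t / 2) + a * (1 - t / 2))) := by
  obtain ⟨c, hbc⟩ : ∃ c, b - a = 2 * c := ⟨(b - a) / 2, by ring⟩
  have hc : c ≠ 0 := by rintro rfl; linarith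
  have hm : a + c = (a + b) / 2 := by linarith
  have hm' : b + -c = (a + b) / 2 := by linarith
  have hms : (a + b) / 2 ∈ Icc a b := ⟨by linarith, by linarith⟩
  have h_left := integral_mul_two_sub_three_mul_mul_comp_add_mul (convex_Icc a b) hf hf'
    hf'' (left_mem_Icc.2 hab.le) (hm ▸ hms) hc
  have h_right := integral_mul_two_sub_three_mul_mul_comp_add_mul (convex_Icc a b) hf hf'
    hf'' (right_mem_Icc.2 hab.le) (hm' ▸ hms) (neg_ne_zero.2 hc)
  have h_int : ∀ p h, p ∈ Icc a b → p + h ∈ Icc a b →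
      IntervalIntegrable (fun t => t * (2 - 3 * t) * f'' (p + h * t)) volume 0 1 :=
    fun p h hp hq => ((by fun_prop : Continuous fun t : ℝ => t * (2 - 3 * t)).continuousOn.mul
      (hf''.comp (by fun_prop) ((convex_Icc a b).mapsTo_add_mul_Icc hp hq))
      ).intervalIntegrable_of_Icc zero_le_one
  have h_split : ∫ t in (0 : ℝ)..1, t * (2 - 3 * t) *
      (f'' (a * (t / 2) + b * (1 - t / 2)) + f'' (b * (t / 2) + a * (1 - t / 2))) =
      (∫ t in (0 : ℝ)..1, t * (2 - 3 * t) * f'' (b + -c * t)) +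
        ∫ t in (0 : ℝ)..1, t * (2 - 3 * t) * f'' (a + c * t) := by
    rw [← intervalIntegral.integral_add (h_int _ _ (right_mem_Icc.2 hab.le) (hm' ▸ hms))
      (h_int _ _ (left_mem_Icc.2 hab.le) (hm ▸ hms))]
    refine integral_congr fun t _ => ?_
    simp only [show a * (t / 2) + b * (1 - t / 2) = b + -c * t by linear_combination -t / 2 * hbc,
      show b * (t / 2) + a * (1 - t / 2) = a + c * t by linear_combination t / 2 * hbc]
    ring
  have hf_cont : ContinuousOn f (Icc a b) := fun x hx => (hf x hx).continuousWithinAt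
  rw [h_split,
    ← integral_add_adjacent_intervals
      ((hf_cont.mono (Icc_subset_Icc le_rfl hms.2)).intervalIntegrable_of_Icc hms.1)
      ((hf_cont.mono (Icc_subset_Icc hms.1 le_rfl)).intervalIntegrable_of_Icc hms.2),
    hbc]
  rw [hm] at h_left
  rw [hm', integral_symm ((a + b) / 2) b] at h_right
  linear_combination -(h_left + h_right) / 12

/-- **Lemma 4.** If `f ∈ C⁴(I)` and `a, b ∈ I` with `a < b`, then
`N(1/6,2/3) - (1/(b-a)) ∫_a^b f
  = ((b-a)²/48) ∫_0^1 t(2-3t)[f''(a t/2 + b(1-t/2)) + f''(b t/2 + a(1-t/2))] dt`. -/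
theorem stmt_10 (f : ℝ → ℝ) (I : Set ℝ) (hI : Convex ℝ I)
    (hf : ContDiffOn ℝ 4 f I)
    (a b : ℝ) (ha : a ∈ I) (hb : b ∈ I) (hab : a < b) :
    (1 / 6) * (f a + f b) + (2 / 3) * f ((a + b) / 2)
      - (1 / (b - a)) * ∫ t in a..b, f t =
    (b - a) ^ 2 / 48 * ∫ t in (0:ℝ)..1, t * (2 - 3 * t) *
      (deriv (deriv f) (a * (t / 2) + b * (1 - t / 2))
        + deriv (deriv f) (b * (t / 2) + a * (1 - t / 2))) := by
  have hs : UniqueDiffOn ℝ (Icc a b) := uniqueDiffOn_Icc hab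
  have hf2 : ContDiffOn ℝ 2 f (Icc a b) :=
    (hf.mono (hI.ordConnected.out ha hb)).of_le (by norm_num)
  have hf1 : ContDiffOn ℝ 1 (derivWithin f (Icc a b)) (Icc a b) :=
    hf2.derivWithin hs (by norm_num)
  rw [simpson_sub_average_eq_of_hasDerivWithinAt hab
    (fun x hx => (hf2.differentiableOn (by norm_num) x hx).hasDerivWithinAt)
    (fun x hx => (hf1.differentiableOn one_ne_zero x hx).hasDerivWithinAt)
    (hf1.derivWithin hs (m := 0) le_rfl).continuousOn]
  congr 1
  refine integral_congr_uIoo fun t ht => ?_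
  rw [uIoo_of_le zero_le_one] at ht
  have h₀ := mul_pos (sub_pos.2 hab) ht.1
  have h₁ := mul_pos (sub_pos.2 hab) (sub_pos.2 ht.2)
  have hx : a * (t / 2) + b * (1 - t / 2) ∈ Ioo a b := by constructor <;> nlinarith
  have hy : b * (t / 2) + a * (1 - t / 2) ∈ Ioo a b := by constructor <;> nlinarith
  simp only [deriv_deriv_eq_derivWithin_derivWithin (Icc_mem_nhds hx.1 hx.2),
    deriv_deriv_eq_derivWithin_derivWithin (Icc_mem_nhds hy.1 hy.2)]
end
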